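/- For the RTG relabeling recursion R_T = 0, R_{t-1} = r_{t-1} + max(R_t, V(s_t)), each relabeled value satisfies the explicit formula R_t = max over k ∈ {t+1, ..., T} of [ (r_t + r_{t+1} + ... + r_{k-1}) + V̄_k ], where V̄_k = V(s_k) for k < T and V̄_T = max(V(s_T), 0) — i.e., the relabeled RTG is the best partial return truncated at some future step plus the value estimate there. -/

import Mathlib

/-- Closed form for the max-relabeled RTG: for `t < T`,
`R t = max_{k ∈ {t+1,…,T}} [(r t + ⋯ + r (k-1)) + V̄ k]`, where `V̄ k = V (s k)`
for `k < T` and `V̄ T = max (V (s T)) 0`. -/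
theorem relabeled_rtg_closed_form {S : Type*} (T : ℕ) (hT : 1 ≤ T)
    (r : ℕ → ℝ) (s : ℕ → S) (V : S → ℝ) (R : ℕ → ℝ)
    (hRT : R T = 0)
    (hRrec : ∀ t, t < T → R t = r t + max (R (t + 1)) (V (s (t + 1)))) :
    ∀ t (ht : t < T),
      R t = (Finset.Icc (t + 1) T).sup'
        (Finset.nonempty_Icc.mpr ht)
        (fun k => (∑ i ∈ Finset.Ico t k, r i) +
          (if k = T then max (V (s T)) 0 else V (s k))) := by
  have key : ∀ (c : ℝ) (F : Finset ℕ) (hF : F.Nonempty) (f : ℕ → ℝ),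
      c + F.sup' hF f = F.sup' hF (fun k => c + f k) := by
    intro c F hF f
    exact Finset.comp_sup'_eq_sup'_comp hF (fun x => c + x)
      (fun x y => (max_add_add_left c x y).symm)
  have hIcoT : ∀ t : ℕ, Finset.Ico t (t + 1) = {t} := by
    intro t; ext k; simp
  intro t ht
  induction' h : T - t with n ih generalizing t
  · omega
  · rcases Nat.lt_or_ge (t + 1) T with h1 | h1
    · -- inductive step
      have hIcc : Finset.Icc (t + 1) T = insert (t + 1) (Finset.Icc (t + 2) T) := by
        ext k; simp [Finset.mem_Icc]; omega
      have hne : (Finset.Icc (t + 2) T).Nonempty := Finset.nonempty_Icc.mpr h1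
      rw [Finset.sup'_congr (Finset.nonempty_Icc.mpr ht) hIcc (fun x _ => rfl),
        Finset.sup'_insert, hRrec t ht, ih (t + 1) h1 (by omega),
        ← max_add_add_left, key, max_comm]
      congr 1
      · rw [if_neg (by omega : ¬ t + 1 = T), hIcoT, Finset.sum_singleton]
      · apply Finset.sup'_congr hne rfl
        intro k hk
        have hk' : t + 2 ≤ k := (Finset.mem_Icc.mp hk).1
        rw [← Finset.sum_Ico_consecutive r (by omega : t ≤ t + 1) (by omega : t + 1 ≤ k),
          hIcoT, Finset.sum_singleton, add_assoc]
      exact hne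
    · -- base case: t + 1 = T
      have hTt : T = t + 1 := by omega
      subst hTt
      rw [Finset.sup'_congr (Finset.nonempty_Icc.mpr ht) (Finset.Icc_self (t + 1))
        (fun x _ => rfl), Finset.sup'_singleton, hRrec t ht, hRT, if_pos rfl,
        hIcoT, Finset.sum_singleton, max_comm]
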